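/- There is an absolute constant C > 0 with the following property. Let h be a natural number and let P = P₀ \ ⋃_{i=1}^h interior(Pᵢ), where P₀ is a convex polygon in ℝ² and each hole Pᵢ is a closed axis-aligned rectangle with nonempty interior, the rectangles being pairwise disjoint and contained in the interior of P₀. Then the geodesic diameter satisfies diam_g(P) ≤ C·diam₂(P), i.e., the distortion ϱ(P) = diam_g(P)/diam₂(P) is O(1), independent of h. -/

import Mathlib

/-!
A staircase that goes up and, whenever it hits the bottom edge of a hole, runs left along that
edge to the hole's corner, is monotone in both coordinates; it therefore leaves any point of `P`
and reaches the upper boundary of `P₀` after a length at most the width plus the height of `P₀`.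
The upper boundary is the graph of a concave function, monotone up to its maximum, so following
it to a highest point of `P₀` costs at most the width plus the height again. Width and height are
attained between boundary points of `P₀`, which lie in `P`, so both are at most `diam₂ P`, and any
two points of `P` are joined through the highest point by a path of length at most `8 diam₂ P`.
-/

open Set Metric ENNReal RealInnerProductSpace

noncomputable section

/-- The Euclidean plane. -/
abbrev Plane := EuclideanSpace ℝ (Fin 2)

/-- A convex polygon: the convex hull of a nonempty finite point set. -/
def IsConvexPolygon (Q : Set Plane) : Prop :=
  ∃ S : Finset Plane, S.Nonempty ∧ Q = convexHull ℝ (S : Set Plane)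

/-- `γ` is a continuous path from `s` to `t` (parametrized on `[0,1]`) with image in `P`. -/
def IsPathIn (P : Set Plane) (γ : ℝ → Plane) (s t : Plane) : Prop :=
  ContinuousOn γ (Set.Icc 0 1) ∧ γ 0 = s ∧ γ 1 = t ∧ Set.MapsTo γ (Set.Icc 0 1) P

/-- Length of a path: its total variation on `[0,1]`. -/
def pathLen (γ : ℝ → Plane) : ℝ≥0∞ := eVariationOn γ (Set.Icc 0 1)

/-- Geodesic distance inside `P`: infimum of lengths of continuous paths
from `s` to `t` contained in `P`. -/
def geod (P : Set Plane) (s t : Plane) : ℝ≥0∞ :=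
  ⨅ γ : {γ : ℝ → Plane // IsPathIn P γ s t}, pathLen γ.1

/-- Geodesic diameter of `P`. -/
def geodDiam (P : Set Plane) : ℝ≥0∞ :=
  ⨆ s ∈ P, ⨆ t ∈ P, geod P s t

/-- The width of a planar set: the minimum, over unit directions `v`,
of the extent of `C` in direction `v`. -/
def setWidth (C : Set Plane) : ℝ :=
  ⨅ v : {v : Plane // ‖v‖ = 1},
    (sSup ((fun x => ⟪x, v.1⟫) '' C) - sInf ((fun x => ⟪x, v.1⟫) '' C))

open Filter Topology
open scoped NNReal

section Variation

variable {α E E₁ E₂ : Type*} [LinearOrder α] [PseudoEMetricSpace E] [PseudoEMetricSpace E₁]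
  [PseudoEMetricSpace E₂]

lemma eVariationOn_le_add_of_edist_le {f : α → E} {g₁ : α → E₁} {g₂ : α → E₂} {s : Set α}
    (h : ∀ x ∈ s, ∀ y ∈ s, edist (f x) (f y) ≤ edist (g₁ x) (g₁ y) + edist (g₂ x) (g₂ y)) :
    eVariationOn f s ≤ eVariationOn g₁ s + eVariationOn g₂ s := by
  refine iSup_le fun ⟨n, u, hu, us⟩ => ?_
  calc ∑ i ∈ Finset.range n, edist (f (u (i + 1))) (f (u i))
      ≤ ∑ i ∈ Finset.range n,
          (edist (g₁ (u (i + 1))) (g₁ (u i)) + edist (g₂ (u (i + 1))) (g₂ (u i))) :=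
        Finset.sum_le_sum fun i _ => h _ (us _) _ (us _)
    _ ≤ eVariationOn g₁ s + eVariationOn g₂ s := by
        rw [Finset.sum_add_distrib]
        exact add_le_add (eVariationOn.sum_le hu us) (eVariationOn.sum_le hu us)

lemma LipschitzOnWith.eVariationOn_Icc_le {f : ℝ → E} {C : ℝ≥0} {a b : ℝ}
    (hf : LipschitzOnWith C f (Icc a b)) :
    eVariationOn f (Icc a b) ≤ C * ENNReal.ofReal (b - a) := by
  have hid : eVariationOn id (Icc a b) ≤ ENNReal.ofReal (b - a) := by simp
  exact (hf.comp_eVariationOn_le (mapsTo_id _)).trans (mul_le_mul_right hid _)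

end Variation

section PlaneCoordinates

lemma continuous_plane_apply (i : Fin 2) : Continuous fun p : Plane => p i := by fun_prop

lemma plane_eta (p : Plane) : !₂[p 0, p 1] = p := by
  ext i; fin_cases i <;> rfl

lemma abs_apply_sub_le_dist (p q : Plane) (i : Fin 2) : |p i - q i| ≤ dist p q := by
  simpa [dist_eq_norm] using PiLp.norm_apply_le (p - q) i

lemma dist_le_abs_sub_add_abs_sub (p q : Plane) : dist p q ≤ |p 0 - q 0| + |p 1 - q 1| := by
  rw [EuclideanSpace.dist_eq, Fin.sum_univ_two, Real.dist_eq, Real.dist_eq, Real.sqrt_le_iff]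
  refine ⟨by positivity, ?_⟩
  nlinarith [abs_nonneg (p 0 - q 0), abs_nonneg (p 1 - q 1), sq_abs (p 0 - q 0),
    sq_abs (p 1 - q 1)]

lemma edist_le_edist_add_edist (p q : Plane) :
    edist p q ≤ edist (p 0) (q 0) + edist (p 1) (q 1) := by
  rw [edist_dist, edist_dist, edist_dist, Real.dist_eq, Real.dist_eq,
    ← ENNReal.ofReal_add (abs_nonneg _) (abs_nonneg _)]
  exact ENNReal.ofReal_le_ofReal (dist_le_abs_sub_add_abs_sub p q)

lemma apply_mem_uIcc_of_mem_segment {p q r : Plane} (hr : r ∈ segment ℝ p q) (i : Fin 2) :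
    r i ∈ uIcc (p i) (q i) := by
  rw [segment_eq_image_lineMap] at hr
  obtain ⟨t, ht, rfl⟩ := hr
  rw [← segment_eq_uIcc, segment_eq_image_lineMap]
  exact ⟨t, ht, by simp [AffineMap.lineMap_apply_module]⟩

lemma exists_add_single_mem_of_mem_interior {K : Set Plane} {p : Plane} (hp : p ∈ interior K)
    (i : Fin 2) : ∃ ε : ℝ, 0 < ε ∧ p + ε • EuclideanSpace.single i 1 ∈ K ∧
      p - ε • EuclideanSpace.single i 1 ∈ K := by
  obtain ⟨ε, hε, hball⟩ := Metric.mem_nhds_iff.1 (mem_interior_iff_mem_nhds.1 hp)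
  refine ⟨ε / 2, by positivity, hball ?_, hball ?_⟩ <;>
    simp [dist_eq_norm, norm_smul, abs_of_pos hε, hε]

lemma notMem_interior_of_isMaxOn {K : Set Plane} {p : Plane} {i : Fin 2}
    (hmax : IsMaxOn (fun q : Plane => q i) K p) : p ∉ interior K := fun hp => by
  obtain ⟨ε, hε, hmem, -⟩ := exists_add_single_mem_of_mem_interior hp i
  have := isMaxOn_iff.1 hmax _ hmem
  simp only [PiLp.add_apply, PiLp.smul_apply, PiLp.single_apply, if_true, smul_eq_mul,
    mul_one] at this
  linarith

lemma notMem_interior_of_isMinOn {K : Set Plane} {p : Plane} {i : Fin 2}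
    (hmin : IsMinOn (fun q : Plane => q i) K p) : p ∉ interior K := fun hp => by
  obtain ⟨ε, hε, -, hmem⟩ := exists_add_single_mem_of_mem_interior hp i
  have := isMinOn_iff.1 hmin _ hmem
  simp only [PiLp.sub_apply, PiLp.smul_apply, PiLp.single_apply, if_true, smul_eq_mul,
    mul_one] at this
  linarith

/-- The extent of a compact set in a coordinate direction is attained at two points of its
boundary, so it is bounded by the diameter of any bounded set containing the boundary. -/
lemma abs_apply_sub_le_diam {K P : Set Plane} (hK : IsCompact K) (hP : K \ interior K ⊆ P)
    (hPb : Bornology.IsBounded P) {p q : Plane} (hp : p ∈ K) (hq : q ∈ K) (i : Fin 2) :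
    |p i - q i| ≤ diam P := by
  obtain ⟨M, hM, hMmax⟩ := hK.exists_isMaxOn ⟨p, hp⟩ (continuous_plane_apply i).continuousOn
  obtain ⟨m, hm, hmmin⟩ := hK.exists_isMinOn ⟨p, hp⟩ (continuous_plane_apply i).continuousOn
  have hMP : M ∈ P := hP ⟨hM, notMem_interior_of_isMaxOn hMmax⟩
  have hmP : m ∈ P := hP ⟨hm, notMem_interior_of_isMinOn hmmin⟩
  have hextent : |p i - q i| ≤ |M i - m i| := by
    rw [abs_le, abs_of_nonneg (by linarith [isMaxOn_iff.1 hMmax p hp, isMinOn_iff.1 hmmin p hp] :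
      (0 : ℝ) ≤ M i - m i)]
    constructor <;> linarith [isMaxOn_iff.1 hMmax p hp, isMaxOn_iff.1 hMmax q hq,
      isMinOn_iff.1 hmmin p hp, isMinOn_iff.1 hmmin q hq]
  exact hextent.trans ((abs_apply_sub_le_dist M m i).trans (dist_le_diam_of_mem hPb hMP hmP))

end PlaneCoordinates

section Geodesic

variable {P : Set Plane} {γ : ℝ → Plane} {s t r : Plane}

lemma geod_le_pathLen (hγ : IsPathIn P γ s t) : geod P s t ≤ pathLen γ :=
  iInf_le (fun γ' : {γ // IsPathIn P γ s t} => pathLen γ'.1) ⟨γ, hγ⟩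

lemma eVariationOn_lineMap_le {E : Type*} [NormedAddCommGroup E] [NormedSpace ℝ E] (p q : E) :
    eVariationOn (AffineMap.lineMap p q : ℝ → E) (Icc 0 1) ≤ edist p q := by
  have := ((lipschitzWith_lineMap (𝕜 := ℝ) p q).lipschitzOnWith
    (s := Icc (0 : ℝ) 1)).eVariationOn_Icc_le
  rwa [sub_zero, ENNReal.ofReal_one, mul_one, ← edist_nndist] at this

lemma geod_le_edist_of_segment_subset (h : segment ℝ s t ⊆ P) : geod P s t ≤ edist s t := by
  refine (geod_le_pathLen ⟨(AffineMap.lineMap_continuous).continuousOn, by simp, by simp,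
    fun u hu => h ?_⟩).trans (eVariationOn_lineMap_le s t)
  rw [segment_eq_image_lineMap]
  exact mem_image_of_mem _ hu

/-- Clamping the parameter to `[0,1]` makes a path continuous on all of `ℝ`. -/
lemma IsPathIn.exists_continuous (hγ : IsPathIn P γ s t) :
    ∃ γ', Continuous γ' ∧ IsPathIn P γ' s t ∧ pathLen γ' = pathLen γ := by
  have hclamp : ∀ u ∈ Icc (0 : ℝ) 1, max 0 (min 1 u) = u := fun u hu => by
    rw [min_eq_right hu.2, max_eq_right hu.1]
  have heq : EqOn (fun u => γ (max 0 (min 1 u))) γ (Icc 0 1) := fun u hu => by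
    simp only [hclamp u hu]
  refine ⟨fun u => γ (max 0 (min 1 u)), ?_, ?_, eVariationOn.eq_of_eqOn heq⟩
  · exact hγ.1.comp_continuous (by fun_prop)
      fun u => ⟨le_max_left _ _, max_le zero_le_one (min_le_left _ _)⟩
  · obtain ⟨hc, h0, h1, hmaps⟩ := hγ
    exact ⟨hc.congr heq, by simpa using h0, by simpa using h1, fun u hu => heq hu ▸ hmaps hu⟩

lemma geod_comm_le : geod P s t ≤ geod P t s := by
  refine le_iInf fun ⟨γ, hc, h0, h1, hmaps⟩ => ?_
  have himage : (fun u : ℝ => 1 - u) '' Icc 0 1 = Icc 0 1 := by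
    rw [image_const_sub_Icc]; norm_num
  refine (geod_le_pathLen (γ := γ ∘ fun u => 1 - u) ⟨?_, by simpa, by simpa, ?_⟩).trans_eq ?_
  · exact hc.comp (by fun_prop) fun u hu => himage ▸ mem_image_of_mem _ hu
  · exact hmaps.comp fun u hu => himage ▸ mem_image_of_mem _ hu
  · rw [pathLen, eVariationOn.comp_eq_of_antitoneOn _ _ fun x _ y _ hxy => by linarith, himage]
    rfl

lemma geod_comm : geod P s t = geod P t s := le_antisymm geod_comm_le geod_comm_le

lemma IsPathIn.exists_trans {γ₁ γ₂ : ℝ → Plane} (h₁ : IsPathIn P γ₁ s t)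
    (h₂ : IsPathIn P γ₂ t r) : ∃ γ, IsPathIn P γ s r ∧ pathLen γ ≤ pathLen γ₁ + pathLen γ₂ := by
  obtain ⟨γ₁, hc₁, ⟨-, h₁0, h₁1, hm₁⟩, hlen₁⟩ := h₁.exists_continuous
  obtain ⟨γ₂, hc₂, ⟨-, h₂0, h₂1, hm₂⟩, hlen₂⟩ := h₂.exists_continuous
  rw [← hlen₁, ← hlen₂]
  let γ : ℝ → Plane := fun u => if u ≤ 1 / 2 then γ₁ (2 * u) else γ₂ (2 * u - 1)
  have hcont : Continuous γ := Continuous.if_le (by fun_prop) (by fun_prop) continuous_id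
    continuous_const fun u hu => by rw [show u = 1 / 2 from hu]; norm_num [h₁1, h₂0]
  refine ⟨γ, ⟨hcont.continuousOn, by simp [γ, h₁0], by norm_num [γ, h₂1], fun u hu => ?_⟩, ?_⟩
  · by_cases hu' : u ≤ 1 / 2
    · simp only [γ, if_pos hu']
      exact hm₁ ⟨by linarith [hu.1], by linarith⟩
    · simp only [γ, if_neg hu']
      exact hm₂ ⟨by linarith, by linarith [hu.2]⟩
  have hsplit := eVariationOn.Icc_add_Icc γ (s := univ) (c := 1) (by norm_num : (0 : ℝ) ≤ 1 / 2)
    (by norm_num) (mem_univ _)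
  simp only [univ_inter] at hsplit
  rw [pathLen, ← hsplit]
  gcongr
  · have heq : EqOn γ (γ₁ ∘ fun u => 2 * u) (Icc 0 (1 / 2)) := fun u hu => by
      simp only [γ, Function.comp, if_pos hu.2]
    rw [eVariationOn.eq_of_eqOn heq, eVariationOn.comp_eq_of_monotoneOn _ _
      fun x _ y _ hxy => by linarith, image_mul_left_Icc (by norm_num) (by norm_num)]
    norm_num [pathLen]
  · have heq : EqOn γ (γ₂ ∘ fun u => 2 * u - 1) (Icc (1 / 2) 1) := fun u hu => by
      rcases hu.1.eq_or_lt with rfl | hlt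
      · norm_num [γ, h₁1, h₂0]
      · simp only [γ, Function.comp, if_neg (not_le.2 hlt)]
    have himage : (fun u : ℝ => 2 * u - 1) '' Icc (1 / 2) 1 = Icc 0 1 := by
      ext v; constructor
      · rintro ⟨u, hu, rfl⟩; exact ⟨by linarith [hu.1], by linarith [hu.2]⟩
      · intro hv; exact ⟨(v + 1) / 2, ⟨by linarith [hv.1], by linarith [hv.2]⟩, by ring⟩
    rw [eVariationOn.eq_of_eqOn heq, eVariationOn.comp_eq_of_monotoneOn _ _
      fun x _ y _ hxy => by linarith, himage]
    rfl

lemma geod_triangle : geod P s r ≤ geod P s t + geod P t r :=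
  le_iInf_add_iInf fun γ₁ γ₂ =>
    let ⟨_, hγ, hlen⟩ := γ₁.2.exists_trans γ₂.2
    (geod_le_pathLen hγ).trans hlen

lemma pathLen_graph_le (u g : ℝ → ℝ) :
    pathLen (fun t => !₂[u t, g t]) ≤ eVariationOn u (Icc 0 1) + eVariationOn g (Icc 0 1) :=
  eVariationOn_le_add_of_edist_le fun s _ t _ => by
    simpa using edist_le_edist_add_edist !₂[u s, g s] !₂[u t, g t]

lemma geod_le_abs_sub_add_abs_sub_of_segment_subset (h : segment ℝ s t ⊆ P) :
    geod P s t ≤ ENNReal.ofReal (|s 0 - t 0| + |s 1 - t 1|) :=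
  (geod_le_edist_of_segment_subset h).trans
    (by rw [edist_dist]; exact ENNReal.ofReal_le_ofReal (dist_le_abs_sub_add_abs_sub s t))

lemma geod_le_ofReal_add {x y : ℝ} (hx : 0 ≤ x) (hy : 0 ≤ y) (h₁ : geod P s t ≤ ENNReal.ofReal x)
    (h₂ : geod P t r ≤ ENNReal.ofReal y) : geod P s r ≤ ENNReal.ofReal (x + y) := by
  rw [ENNReal.ofReal_add hx hy]
  exact geod_triangle.trans (add_le_add h₁ h₂)

end Geodesic

section ConcaveInterval

variable {g : ℝ → ℝ} {a b : ℝ}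

lemma ConcaveOn.monotoneOn_of_isMaxOn (hg : ConcaveOn ℝ (Icc a b) g)
    (hmax : IsMaxOn g (Icc a b) b) : MonotoneOn g (Icc a b) := by
  intro s hs t ht hst
  have hmin := hg.min_le_of_mem_segment hs (right_mem_Icc.2 (hs.1.trans hs.2))
    (by rw [segment_eq_Icc (hst.trans ht.2)]; exact ⟨hst, ht.2⟩)
  rwa [min_eq_left (isMaxOn_iff.1 hmax s hs)] at hmin

/-- At `a` continuity comes from upper semicontinuity and monotonicity; at `b` from the maximum
and the chord from `a` to `b`, which lies below the graph. -/
lemma ConcaveOn.continuousOn_of_isMaxOn (hg : ConcaveOn ℝ (Icc a b) g)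
    (hmax : IsMaxOn g (Icc a b) b) (husc : UpperSemicontinuousWithinAt g (Icc a b) a) :
    ContinuousOn g (Icc a b) := by
  intro t ht
  rw [continuousWithinAt_iff_lower_upperSemicontinuousWithinAt]
  rcases ht.1.eq_or_lt with rfl | hat
  · exact ⟨fun y hy => eventually_nhdsWithin_of_forall fun u hu =>
      hy.trans_le (hg.monotoneOn_of_isMaxOn hmax ht hu hu.1), husc⟩
  rcases ht.2.eq_or_lt with rfl | htb
  · refine ⟨fun y hy => ?_, fun y hy => eventually_nhdsWithin_of_forall fun u hu =>
      (isMaxOn_iff.1 hmax u hu).trans_lt hy⟩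
    let chord : ℝ → ℝ := fun u => g a + (u - a) / (t - a) * (g t - g a)
    have hchord : ∀ u ∈ Icc a t, chord u ≤ g u := fun u hu => by
      have hta : 0 < t - a := sub_pos.2 hat
      have := hg.2 (left_mem_Icc.2 ht.1) ht
        (div_nonneg (by linarith [hu.2]) hta.le : 0 ≤ (t - u) / (t - a))
        (div_nonneg (by linarith [hu.1]) hta.le : 0 ≤ (u - a) / (t - a))
        (by field_simp; ring)
      calc chord u = ((t - u) / (t - a)) • g a + ((u - a) / (t - a)) • g t := by
            simp only [chord, smul_eq_mul]; field_simp; ring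
        _ ≤ _ := this
        _ = g u := by congr 1; simp only [smul_eq_mul]; field_simp; ring
    have hlim : Tendsto chord (𝓝 t) (𝓝 (g t)) := by
      have : Continuous chord := by fun_prop
      simpa [chord, div_self (sub_pos.2 hat).ne'] using this.tendsto t
    filter_upwards [self_mem_nhdsWithin, nhdsWithin_le_nhds (hlim.eventually (lt_mem_nhds hy))]
      with u hu hu' using hu'.trans_le (hchord u hu)
  · have hint : t ∈ interior (Icc a b) := by rw [interior_Icc]; exact ⟨hat, htb⟩
    have hcont := ((hg.continuousOn_interior t hint).continuousAt
      (isOpen_interior.mem_nhds hint)).continuousWithinAt (s := Icc a b)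
    exact continuousWithinAt_iff_lower_upperSemicontinuousWithinAt.1 hcont

end ConcaveInterval

section UpperEnvelope

variable {K : Set Plane}

/-- The height of the upper boundary of `K` above the abscissa `x`; it is the junk value `0` when
the vertical line through `x` misses `K`. -/
def upperEnv (K : Set Plane) (x : ℝ) : ℝ := sSup {y | !₂[x, y] ∈ K}

lemma isCompact_slice (hK : IsCompact K) (x : ℝ) : IsCompact {y | !₂[x, y] ∈ K} :=
  (hK.image (continuous_plane_apply 1)).of_isClosed_subset
    (hK.isClosed.preimage (by fun_prop)) fun y hy => ⟨_, hy, by simp⟩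

lemma le_upperEnv (hK : IsCompact K) {p : Plane} (hp : p ∈ K) : p 1 ≤ upperEnv K (p 0) :=
  le_csSup (isCompact_slice hK _).bddAbove (by
    show !₂[p 0, p 1] ∈ K; rwa [plane_eta])

lemma upperEnv_mem (hK : IsCompact K) {p : Plane} (hp : p ∈ K) :
    !₂[p 0, upperEnv K (p 0)] ∈ K :=
  (isCompact_slice hK _).sSup_mem ⟨p 1, by
    show !₂[p 0, p 1] ∈ K; rwa [plane_eta]⟩

lemma upperEnv_notMem_interior (hK : IsCompact K) (x : ℝ) :
    !₂[x, upperEnv K x] ∉ interior K := fun h => by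
  obtain ⟨ε, hε, hmem, -⟩ := exists_add_single_mem_of_mem_interior h 1
  exact absurd (le_upperEnv hK hmem) (by simpa using hε)

lemma upperEnv_concaveOn (hK : IsCompact K) (hKc : Convex ℝ K) :
    ConcaveOn ℝ ((fun p : Plane => p 0) '' K) (upperEnv K) := by
  refine ⟨hKc.is_linear_image ⟨fun _ _ => rfl, fun _ _ => rfl⟩, ?_⟩
  rintro _ ⟨p, hp, rfl⟩ _ ⟨q, hq, rfl⟩ s t hs ht hst
  have := le_upperEnv hK (hKc (upperEnv_mem hK hp) (upperEnv_mem hK hq) hs ht hst)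
  simpa using this

/-- Upper semicontinuity of the upper boundary, from compactness. -/
lemma eventually_forall_apply_lt_of_upperEnv_lt (hK : IsCompact K) {x y : ℝ}
    (hy : upperEnv K x < y) : ∀ᶠ v in 𝓝 x, ∀ p ∈ K, p 0 = v → p 1 < y := by
  have hclosed : IsClosed ((fun p : Plane => p 0) '' (K ∩ {p | y ≤ p 1})) :=
    ((hK.inter_right (isClosed_le continuous_const (continuous_plane_apply 1))).image
      (continuous_plane_apply 0)).isClosed
  have hx : x ∉ (fun p : Plane => p 0) '' (K ∩ {p | y ≤ p 1}) := by
    rintro ⟨p, ⟨hpK, hpy⟩, rfl⟩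
    exact (le_upperEnv hK hpK).not_gt (hy.trans_le hpy)
  filter_upwards [hclosed.isOpen_compl.mem_nhds hx] with v hv p hp hpv
  exact lt_of_not_ge fun h => hv ⟨p, ⟨hp, h⟩, hpv⟩

/-- The path follows the upper boundary, which avoids `interior K`. The envelope is concave with
its maximum at `T`, hence monotone along the way, so its variation is just its total rise. -/
lemma geod_upperEnv_le_of_isMaxOn (hK : IsCompact K) (hKc : Convex ℝ K) {P : Set Plane}
    (hP : K \ interior K ⊆ P) {p T : Plane} (hp : p ∈ K) (hT : T ∈ K)
    (hmax : IsMaxOn (fun q : Plane => q 1) K T) :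
    geod P !₂[p 0, upperEnv K (p 0)] T ≤
      ENNReal.ofReal |T 0 - p 0| + ENNReal.ofReal (T 1 - upperEnv K (p 0)) := by
  let u : ℝ →ᵃ[ℝ] ℝ := AffineMap.lineMap (p 0) (T 0)
  let g : ℝ → ℝ := upperEnv K ∘ u
  have hu : ∀ t ∈ Icc (0 : ℝ) 1, u t ∈ (fun q : Plane => q 0) '' K := fun t ht =>
    ⟨AffineMap.lineMap p T t, hKc.lineMap_mem hp hT ht, by simp [u, AffineMap.lineMap_apply_module]⟩
  have htop : ∀ t ∈ Icc (0 : ℝ) 1, !₂[u t, g t] ∈ K := fun t ht => by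
    obtain ⟨q, hq, hqt⟩ := hu t ht
    simpa [g, ← hqt] using upperEnv_mem hK hq
  have hg1 : g 1 = T 1 := le_antisymm (by simpa using hmax (htop 1 ⟨zero_le_one, le_rfl⟩))
    (by simpa [g, u] using le_upperEnv hK hT)
  have hgmax : IsMaxOn g (Icc 0 1) 1 := fun t ht => by
    simpa [hg1] using hmax (htop t ht)
  have hconc : ConcaveOn ℝ (Icc 0 1) g :=
    ((upperEnv_concaveOn hK hKc).comp_affineMap u).subset hu (convex_Icc 0 1)
  have husc : UpperSemicontinuousWithinAt g (Icc 0 1) 0 := fun y hy => by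
    have := (u.continuous_of_finiteDimensional.tendsto 0).eventually
      (eventually_forall_apply_lt_of_upperEnv_lt hK hy)
    filter_upwards [self_mem_nhdsWithin, nhdsWithin_le_nhds this] with t ht h
    simpa using h _ (htop t ht) (by simp)
  have hγ : IsPathIn P (fun t => !₂[u t, g t]) !₂[p 0, upperEnv K (p 0)] T := by
    refine ⟨?_, by simp [g, u], ?_, fun t ht => hP ⟨htop t ht, upperEnv_notMem_interior hK _⟩⟩
    · have := hconc.continuousOn_of_isMaxOn hgmax husc
      have := u.continuous_of_finiteDimensional.continuousOn (s := Icc 0 1)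
      fun_prop
    · show !₂[u 1, g 1] = T
      rw [hg1, ← plane_eta T]
      simp [u]
  refine (geod_le_pathLen hγ).trans ((pathLen_graph_le u g).trans ?_)
  gcongr
  · simpa [edist_dist, Real.dist_eq, abs_sub_comm] using
      eVariationOn_lineMap_le (p 0) (T 0)
  · have := (hconc.monotoneOn_of_isMaxOn hgmax).eVariationOn_eq (left_mem_Icc.2 zero_le_one)
      (right_mem_Icc.2 zero_le_one)
    rw [inter_self, hg1] at this
    simpa [g, u] using this.le

end UpperEnvelope

section RectangularHoles

def rect (a b c d : ℝ) : Set Plane := {p | p 0 ∈ Icc a b ∧ p 1 ∈ Icc c d}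

lemma interior_rect (a b c d : ℝ) :
    interior (rect a b c d) = {p | p 0 ∈ Ioo a b ∧ p 1 ∈ Ioo c d} := by
  have hopen : ∀ i : Fin 2, IsOpenMap fun p : Plane => p i := fun i =>
    (EuclideanSpace.proj i : Plane →L[ℝ] ℝ).isOpenMap fun x => ⟨EuclideanSpace.single i x, by simp⟩
  have hrect : rect a b c d =
      (fun p : Plane => p 0) ⁻¹' Icc a b ∩ (fun p : Plane => p 1) ⁻¹' Icc c d := rfl
  rw [hrect, interior_inter,
    ← (hopen 0).preimage_interior_eq_interior_preimage (continuous_plane_apply 0),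
    ← (hopen 1).preimage_interior_eq_interior_preimage (continuous_plane_apply 1),
    interior_Icc, interior_Icc]
  rfl

variable {ι : Type*} {K : Set Plane} {a b c d : ι → ℝ}

def withRectHoles (K : Set Plane) (a b c d : ι → ℝ) : Set Plane :=
  K \ ⋃ i, interior (rect (a i) (b i) (c i) (d i))

lemma mem_withRectHoles {p : Plane} : p ∈ withRectHoles K a b c d ↔
    p ∈ K ∧ ∀ i, ¬(p 0 ∈ Ioo (a i) (b i) ∧ p 1 ∈ Ioo (c i) (d i)) := by
  simp only [withRectHoles, interior_rect, Set.mem_sdiff, mem_iUnion, mem_ofPred_eq, not_exists]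

lemma diff_interior_subset_withRectHoles
    (hsub : ∀ i, rect (a i) (b i) (c i) (d i) ⊆ interior K) :
    K \ interior K ⊆ withRectHoles K a b c d := fun _ hp =>
  ⟨hp.1, by simpa using fun i hi => hp.2 (hsub i (interior_subset hi))⟩

lemma mem_withRectHoles_of_bottom_edge (hcd : ∀ i, c i ≤ d i)
    (hdisj : Pairwise (Function.onFun Disjoint fun i => rect (a i) (b i) (c i) (d i)))
    (hsub : ∀ i, rect (a i) (b i) (c i) (d i) ⊆ interior K) {j : ι} {p : Plane}
    (hp0 : p 0 ∈ Icc (a j) (b j)) (hp1 : p 1 = c j) : p ∈ withRectHoles K a b c d := by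
  have hpj : p ∈ rect (a j) (b j) (c j) (d j) := ⟨hp0, hp1 ▸ le_rfl, hp1 ▸ hcd j⟩
  refine ⟨interior_subset (hsub j hpj), ?_⟩
  simp only [mem_iUnion, not_exists]
  intro i hi
  rcases eq_or_ne i j with rfl | hij
  · rw [interior_rect] at hi
    exact hi.2.1.ne' hp1
  · exact (hdisj hij).ne_of_mem (interior_subset hi) hpj rfl

lemma segment_subset_withRectHoles_of_vertical (hKc : Convex ℝ K) {z : Plane} {y : ℝ}
    (hz : z ∈ withRectHoles K a b c d) (hy : z 1 ≤ y) (hyK : !₂[z 0, y] ∈ K)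
    (hfree : ∀ i, z 0 ∈ Ioo (a i) (b i) → z 1 ≤ c i → y ≤ c i) :
    segment ℝ z !₂[z 0, y] ⊆ withRectHoles K a b c d := by
  intro r hr
  rw [mem_withRectHoles] at hz ⊢
  have hr0 : r 0 = z 0 := by simpa using apply_mem_uIcc_of_mem_segment hr 0
  have hr1 : r 1 ∈ Icc (z 1) y := by
    simpa [uIcc_of_le hy] using apply_mem_uIcc_of_mem_segment hr 1
  refine ⟨hKc.segment_subset hz.1 hyK hr, fun i ⟨hi0, hi1⟩ => ?_⟩
  rw [hr0] at hi0
  by_cases hci : z 1 ≤ c i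
  · linarith [hfree i hi0 hci, hi1.1, hr1.2]
  · exact hz.2 i ⟨hi0, lt_of_not_ge hci, by linarith [hi1.2, hr1.1]⟩

end RectangularHoles

section Staircase

variable {ι : Type*} {K : Set Plane} {a b c d : ι → ℝ}

/-- The detour around the lowest hole `R` above `z`: up to its bottom edge, then left to its
lower left corner. -/
lemma geod_le_of_lowest_hole_above (hKc : Convex ℝ K) (hcd : ∀ i, c i ≤ d i)
    (hdisj : Pairwise (Function.onFun Disjoint fun i => rect (a i) (b i) (c i) (d i)))
    (hsub : ∀ i, rect (a i) (b i) (c i) (d i) ⊆ interior K) {z : Plane}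
    (hz : z ∈ withRectHoles K a b c d) {R : ι} (hzR : z 0 ∈ Ioo (a R) (b R)) (hcR : z 1 ≤ c R)
    (hRmin : ∀ i, z 0 ∈ Ioo (a i) (b i) → z 1 ≤ c i → c R ≤ c i) :
    !₂[a R, c R] ∈ withRectHoles K a b c d ∧
      geod (withRectHoles K a b c d) z !₂[a R, c R] ≤
        ENNReal.ofReal (c R - z 1 + (z 0 - a R)) := by
  have hedge : ∀ x ∈ Icc (a R) (b R), !₂[x, c R] ∈ withRectHoles K a b c d := fun x hx =>
    mem_withRectHoles_of_bottom_edge hcd hdisj hsub (by simpa using hx) (by simp)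
  have hup : geod (withRectHoles K a b c d) z !₂[z 0, c R] ≤ ENNReal.ofReal (c R - z 1) := by
    have hseg := geod_le_abs_sub_add_abs_sub_of_segment_subset
      (segment_subset_withRectHoles_of_vertical hKc hz hcR (hedge _ ⟨hzR.1.le, hzR.2.le⟩).1 hRmin)
    simpa [abs_of_nonpos (sub_nonpos.2 hcR)] using hseg
  have hleft : geod (withRectHoles K a b c d) !₂[z 0, c R] !₂[a R, c R] ≤
      ENNReal.ofReal (z 0 - a R) := by
    have hseg := geod_le_abs_sub_add_abs_sub_of_segment_subset (P := withRectHoles K a b c d)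
      (s := !₂[z 0, c R]) (t := !₂[a R, c R]) fun r hr => by
        have hr0 := apply_mem_uIcc_of_mem_segment hr 0
        have hr1 := apply_mem_uIcc_of_mem_segment hr 1
        simp only [Matrix.cons_val_zero, Matrix.cons_val_one, uIcc_self, mem_singleton_iff]
          at hr0 hr1
        rw [uIcc_of_ge hzR.1.le] at hr0
        exact mem_withRectHoles_of_bottom_edge hcd hdisj hsub ⟨hr0.1, hr0.2.trans hzR.2.le⟩ hr1
    simpa [abs_of_pos (sub_pos.2 hzR.1)] using hseg
  exact ⟨hedge _ ⟨le_rfl, (hzR.1.trans hzR.2).le⟩,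
    geod_le_ofReal_add (sub_nonneg.2 hcR) (sub_nonneg.2 hzR.1.le) hup hleft⟩

variable [Fintype ι]

/-- From any point of the domain, a staircase going up, and to the left along the bottom edge of
each hole it runs into, reaches the upper boundary of `K`. Each corner passed lowers the number of
holes whose bottom edge lies above and starts to the left of the current point. -/
theorem exists_staircase (hK : IsCompact K) (hKc : Convex ℝ K) (hcd : ∀ i, c i ≤ d i)
    (hdisj : Pairwise (Function.onFun Disjoint fun i => rect (a i) (b i) (c i) (d i)))
    (hsub : ∀ i, rect (a i) (b i) (c i) (d i) ⊆ interior K) {z : Plane}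
    (hz : z ∈ withRectHoles K a b c d) :
    ∃ q ∈ K, q 0 ≤ z 0 ∧ z 1 ≤ upperEnv K (q 0) ∧
      geod (withRectHoles K a b c d) z !₂[q 0, upperEnv K (q 0)] ≤
        ENNReal.ofReal (z 0 - q 0 + (upperEnv K (q 0) - z 1)) := by
  induction hn : (Finset.univ.filter fun j => z 1 ≤ c j ∧ a j < z 0).card
    using Nat.strong_induction_on generalizing z with
  | _ n ih =>
    by_cases hblocked : ∃ j, z 0 ∈ Ioo (a j) (b j) ∧ z 1 ≤ c j
    swap
    · simp only [not_exists, not_and, not_le] at hblocked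
      refine ⟨z, hz.1, le_rfl, le_upperEnv hK hz.1, ?_⟩
      have hseg := geod_le_abs_sub_add_abs_sub_of_segment_subset
        (segment_subset_withRectHoles_of_vertical hKc hz (le_upperEnv hK hz.1)
          (upperEnv_mem hK hz.1) fun i hi hci => absurd hci (not_le.2 (hblocked i hi)))
      simpa [abs_of_nonpos (sub_nonpos.2 (le_upperEnv hK hz.1))] using hseg
    obtain ⟨R, hR, hRmin⟩ := Finset.exists_min_image
      (Finset.univ.filter fun j => z 0 ∈ Ioo (a j) (b j) ∧ z 1 ≤ c j) c
      (by obtain ⟨j, hj⟩ := hblocked; exact ⟨j, by simpa using hj⟩)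
    simp only [Finset.mem_filter, Finset.mem_univ, true_and] at hR hRmin
    obtain ⟨hwP, hdetour⟩ := geod_le_of_lowest_hole_above hKc hcd hdisj hsub hz hR.1 hR.2
      fun i hi hci => hRmin i ⟨hi, hci⟩
    have hcard : (Finset.univ.filter fun j => c R ≤ c j ∧ a j < a R).card < n := by
      rw [← hn]
      refine Finset.card_lt_card ⟨fun j hj => ?_, fun hsub' => ?_⟩
      · simp only [Finset.mem_filter, Finset.mem_univ, true_and] at hj ⊢
        exact ⟨hR.2.trans hj.1, hj.2.trans hR.1.1⟩
      · simpa using hsub' (by simp [hR.2, hR.1.1] : R ∈ _)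
    obtain ⟨q, hq, hq0, hq1, hrest⟩ := ih _ hcard hwP (by simp)
    simp only [Matrix.cons_val_zero, Matrix.cons_val_one] at hq0 hq1 hrest
    refine ⟨q, hq, by linarith [hR.1.1], hR.2.trans hq1, ?_⟩
    refine (geod_le_ofReal_add (by linarith [hR.1.1]) (by linarith) hdetour hrest).trans_eq ?_
    congr 1
    ring

end Staircase

section Diameter

variable {ι : Type*} [Fintype ι] {K : Set Plane} {a b c d : ι → ℝ}

lemma geod_le_four_mul_diam_of_isMaxOn (hK : IsCompact K) (hKc : Convex ℝ K)
    (hcd : ∀ i, c i ≤ d i)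
    (hdisj : Pairwise (Function.onFun Disjoint fun i => rect (a i) (b i) (c i) (d i)))
    (hsub : ∀ i, rect (a i) (b i) (c i) (d i) ⊆ interior K) {T : Plane} (hT : T ∈ K)
    (hTmax : IsMaxOn (fun q : Plane => q 1) K T) {z : Plane} (hz : z ∈ withRectHoles K a b c d) :
    geod (withRectHoles K a b c d) z T ≤
      ENNReal.ofReal (4 * diam (withRectHoles K a b c d)) := by
  set P := withRectHoles K a b c d
  set D := diam P
  have hD : 0 ≤ D := diam_nonneg
  have hfront : K \ interior K ⊆ P := diff_interior_subset_withRectHoles hsub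
  have hext : ∀ p ∈ K, ∀ q ∈ K, ∀ i, |p i - q i| ≤ D := fun p hp q hq i =>
    abs_apply_sub_le_diam hK hfront (hK.isBounded.subset sdiff_subset) hp hq i
  obtain ⟨q, hq, -, -, hstair⟩ := exists_staircase hK hKc hcd hdisj hsub hz
  have hwalk := geod_upperEnv_le_of_isMaxOn hK hKc hfront hq hT hTmax
  have htop_z : |upperEnv K (q 0) - z 1| ≤ D := by
    simpa using hext _ (upperEnv_mem hK hq) z hz.1 1
  have htop_T : |T 1 - upperEnv K (q 0)| ≤ D := by
    simpa using hext T hT _ (upperEnv_mem hK hq) 1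
  calc geod P z T ≤ geod P z !₂[q 0, upperEnv K (q 0)] + geod P !₂[q 0, upperEnv K (q 0)] T :=
        geod_triangle
    _ ≤ ENNReal.ofReal (D + D) + (ENNReal.ofReal D + ENNReal.ofReal D) := by
        refine add_le_add (hstair.trans (ENNReal.ofReal_le_ofReal (add_le_add ?_ ?_)))
          (hwalk.trans (add_le_add (ENNReal.ofReal_le_ofReal ?_) (ENNReal.ofReal_le_ofReal ?_)))
        · exact (le_abs_self _).trans (hext z hz.1 q hq 0)
        · exact (le_abs_self _).trans htop_z
        · exact hext T hT q hq 0
        · exact (le_abs_self _).trans htop_T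
    _ = ENNReal.ofReal (4 * D) := by
        rw [← ENNReal.ofReal_add hD hD, ← ENNReal.ofReal_add (by positivity) (by positivity)]
        ring_nf

theorem geodDiam_withRectHoles_le (hK : IsCompact K) (hKc : Convex ℝ K) (hcd : ∀ i, c i ≤ d i)
    (hdisj : Pairwise (Function.onFun Disjoint fun i => rect (a i) (b i) (c i) (d i)))
    (hsub : ∀ i, rect (a i) (b i) (c i) (d i) ⊆ interior K) :
    geodDiam (withRectHoles K a b c d) ≤
      ENNReal.ofReal (8 * diam (withRectHoles K a b c d)) := by
  refine iSup₂_le fun s hs => iSup₂_le fun t ht => ?_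
  obtain ⟨T, hT, hTmax⟩ := hK.exists_isMaxOn ⟨s, hs.1⟩ (continuous_plane_apply 1).continuousOn
  have hD : 0 ≤ diam (withRectHoles K a b c d) := diam_nonneg
  calc geod _ s t ≤ geod _ s T + geod _ T t := geod_triangle
    _ = geod _ s T + geod _ t T := by rw [geod_comm (s := T)]
    _ ≤ ENNReal.ofReal (4 * diam _) + ENNReal.ofReal (4 * diam _) :=
        add_le_add (geod_le_four_mul_diam_of_isMaxOn hK hKc hcd hdisj hsub hT hTmax hs)
          (geod_le_four_mul_diam_of_isMaxOn hK hKc hcd hdisj hsub hT hTmax ht)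
    _ = ENNReal.ofReal (8 * diam _) := by
        rw [← ENNReal.ofReal_add (by positivity) (by positivity)]
        ring_nf

end Diameter

/-- There is an absolute constant `C > 0` such that for every polygonal domain
`P = P₀ \ ⋃ᵢ interior Pᵢ` where `P₀` is a convex polygon and the holes are pairwise disjoint
closed axis-aligned rectangles with nonempty interior contained in the interior of `P₀`,
the geodesic diameter satisfies `diam_g(P) ≤ C·diam₂(P)`. -/
theorem axis_aligned_geodesic_diameter :
    ∃ C : ℝ, 0 < C ∧
      ∀ (h : ℕ) (P₀ : Set Plane) (Q : Fin h → Set Plane)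
        (a b c d : Fin h → ℝ),
        IsConvexPolygon P₀ →
        (∀ i, Q i = {p : Plane | p 0 ∈ Set.Icc (a i) (b i) ∧ p 1 ∈ Set.Icc (c i) (d i)}) →
        (∀ i, a i < b i ∧ c i < d i) →
        Pairwise (Function.onFun Disjoint Q) →
        (∀ i, Q i ⊆ interior P₀) →
        geodDiam (P₀ \ ⋃ i, interior (Q i)) ≤
          ENNReal.ofReal (C * Metric.diam (P₀ \ ⋃ i, interior (Q i))) := by
  refine ⟨8, by norm_num, fun h P₀ Q a b c d hpoly hQ hab hdisj hsub => ?_⟩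
  obtain ⟨S, -, rfl⟩ := hpoly
  obtain rfl : Q = fun i => rect (a i) (b i) (c i) (d i) := funext hQ
  exact geodDiam_withRectHoles_le (S.finite_toSet.isCompact_convexHull (𝕜 := ℝ))
    (convex_convexHull ℝ _) (fun i => (hab i).2.le) hdisj hsub
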